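/- arXiv:2406.05503 — 3 statements merged into one kernel-verified Lean document; each statement's English description precedes it below -/
import Mathlib

section
/- Let M be a complete Riemannian manifold and let F be a closed subset of M which is the image of a smooth submanifold (a closed leaf). Define on the set of leaves the distance d(F₁,F₂) = inf { d(z₁,z₂) : z₁ ∈ F₁, z₂ ∈ F₂ }. If the leaf distance function is leaf-invariant (i.e., d(y, F) = d(y', F) whenever y, y' lie in the same leaf), then for any two leaves p₁, p₂ there exists a unit-speed minimizing geodesic σ : [0,ρ] → leaf-space with σ(0) = p₁, σ(ρ) = p₂, where ρ = d(p₁,p₂); i.e., the leaf space with this metric is a geodesic metric space. -/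
/-- The distance between two leaves (equivalence classes of the setoid `S`),
defined as the infimum of distances between their points. -/
noncomputable def leafSpaceDist {M : Type*} [MetricSpace M] (S : Setoid M)
    (p q : Quotient S) : ℝ :=
  sInf (Set.image2 dist {a : M | Quotient.mk S a = p} {b : M | Quotient.mk S b = q})

section Aux

variable {M : Type*} [MetricSpace M] [ProperSpace M] {S : Setoid M}

lemma leaf_set_eq (b : M) :
    {a : M | Quotient.mk S a = Quotient.mk S b} = {z : M | S.r b z} := by
  ext a
  simp only [Set.mem_setOf_eq]
  constructor
  · intro h; exact Quotient.exact h.symm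
  · intro h; exact (Quotient.sound h).symm

lemma leafSpaceDist_eq_infDist
    (hinv : ∀ x y y' : M, S.r y y' →
      Metric.infDist y {z : M | S.r x z} = Metric.infDist y' {z : M | S.r x z})
    (x b : M) :
    leafSpaceDist S (Quotient.mk S x) (Quotient.mk S b)
      = Metric.infDist x {z : M | S.r b z} := by
  have hbB : b ∈ {z : M | S.r b z} := S.refl b
  have hBne : ({z : M | S.r b z} : Set M).Nonempty := ⟨b, hbB⟩
  have hbdd : BddBelow (Set.image2 dist {a : M | Quotient.mk S a = Quotient.mk S x}
      {b' : M | Quotient.mk S b' = Quotient.mk S b}) := by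
    refine ⟨0, ?_⟩
    rintro d ⟨u, -, v, -, rfl⟩
    exact dist_nonneg
  apply le_antisymm
  · refine le_of_forall_pos_le_add fun ε hε => ?_
    have hlt : Metric.infDist x {z : M | S.r b z}
        < Metric.infDist x {z : M | S.r b z} + ε := by linarith
    obtain ⟨z, hz, hzd⟩ := (Metric.infDist_lt_iff hBne).1 hlt
    have hmem : dist x z ∈ Set.image2 dist {a : M | Quotient.mk S a = Quotient.mk S x}
        {b' : M | Quotient.mk S b' = Quotient.mk S b} := by
      refine Set.mem_image2_of_mem rfl ?_
      rw [leaf_set_eq]; exact hz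
    exact le_trans (csInf_le hbdd hmem) hzd.le
  · refine le_csInf ?_ ?_
    · refine ⟨dist x b, Set.mem_image2_of_mem rfl ?_⟩
      rw [leaf_set_eq]; exact hbB
    · rintro d ⟨u, hu, v, hv, rfl⟩
      have hxu : S.r x u := Quotient.exact (hu : Quotient.mk S u = Quotient.mk S x).symm
      have h1 : Metric.infDist x {z : M | S.r b z} = Metric.infDist u {z : M | S.r b z} :=
        hinv b x u hxu
      have hv' : v ∈ {z : M | S.r b z} := by rw [← leaf_set_eq]; exact hv
      rw [h1]
      exact Metric.infDist_le_dist_of_mem hv'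

lemma leafSpaceDist_symm (p q : Quotient S) :
    leafSpaceDist S p q = leafSpaceDist S q p := by
  unfold leafSpaceDist
  rw [Set.image2_swap]
  simp only [dist_comm]

lemma leafSpaceDist_le_dist
    (hinv : ∀ x y y' : M, S.r y y' →
      Metric.infDist y {z : M | S.r x z} = Metric.infDist y' {z : M | S.r x z})
    (a b : M) :
    leafSpaceDist S (Quotient.mk S a) (Quotient.mk S b) ≤ dist a b := by
  rw [leafSpaceDist_eq_infDist hinv]
  exact Metric.infDist_le_dist_of_mem (S.refl b)

lemma leafSpaceDist_attained
    (hclosed : ∀ x : M, IsClosed {y : M | S.r x y})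
    (hinv : ∀ x y y' : M, S.r y y' →
      Metric.infDist y {z : M | S.r x z} = Metric.infDist y' {z : M | S.r x z})
    (p q : Quotient S) :
    ∃ y z : M, Quotient.mk S y = p ∧ Quotient.mk S z = q ∧
      dist y z = leafSpaceDist S p q := by
  obtain ⟨x, rfl⟩ := Quotient.exists_rep p
  obtain ⟨b, rfl⟩ := Quotient.exists_rep q
  obtain ⟨z, hz, hzd⟩ := (hclosed b).exists_infDist_eq_dist ⟨b, S.refl b⟩ x
  exact ⟨x, z, rfl, (Quotient.sound hz).symm, by
    rw [leafSpaceDist_eq_infDist hinv, hzd]⟩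

lemma leafSpaceDist_triangle
    (hclosed : ∀ x : M, IsClosed {y : M | S.r x y})
    (hinv : ∀ x y y' : M, S.r y y' →
      Metric.infDist y {z : M | S.r x z} = Metric.infDist y' {z : M | S.r x z})
    (p q r : Quotient S) :
    leafSpaceDist S p r ≤ leafSpaceDist S p q + leafSpaceDist S q r := by
  obtain ⟨x, y, hx, hy, hxy⟩ := leafSpaceDist_attained hclosed hinv p q
  obtain ⟨w, rfl⟩ := Quotient.exists_rep r
  have h1 : leafSpaceDist S p (Quotient.mk S w) = Metric.infDist x {z : M | S.r w z} := by
    rw [← hx, leafSpaceDist_eq_infDist hinv]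
  have h2 : leafSpaceDist S q (Quotient.mk S w) = Metric.infDist y {z : M | S.r w z} := by
    rw [← hy, leafSpaceDist_eq_infDist hinv]
  rw [h1, h2, ← hxy]
  calc Metric.infDist x {z : M | S.r w z}
      ≤ Metric.infDist y {z : M | S.r w z} + dist x y :=
        Metric.infDist_le_infDist_add_dist
    _ = dist x y + Metric.infDist y {z : M | S.r w z} := by ring

end Aux

/-- The leaf space of a foliation of a complete (proper) Riemannian manifold by
closed leaves, with the distance `d(F₁,F₂) = inf {d(z₁,z₂) : z₁ ∈ F₁, z₂ ∈ F₂}`,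
is a geodesic metric space: any two leaves are joined by a unit-speed minimizing
geodesic. -/
theorem leafSpace_geodesic
    {M : Type*} [MetricSpace M] [ProperSpace M]
    -- M is a geodesic space (consequence of completeness of the Riemannian metric):
    (hgeo : ∀ x y : M, ∃ γ : ℝ → M, γ 0 = x ∧ γ (dist x y) = y ∧
      ∀ s ∈ Set.Icc (0 : ℝ) (dist x y), ∀ t ∈ Set.Icc (0 : ℝ) (dist x y),
        dist (γ s) (γ t) = |t - s|)
    -- the partition into leaves:
    (S : Setoid M)
    -- the leaves are closed subsets of M:
    (hclosed : ∀ x : M, IsClosed {y : M | S.r x y})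
    -- leaf invariance of the distance to a leaf (bundle-like property):
    (hinv : ∀ x y y' : M, S.r y y' →
      Metric.infDist y {z : M | S.r x z} = Metric.infDist y' {z : M | S.r x z}) :
    ∀ p₁ p₂ : Quotient S, ∃ σ : ℝ → Quotient S,
      σ 0 = p₁ ∧ σ (leafSpaceDist S p₁ p₂) = p₂ ∧
      ∀ s ∈ Set.Icc (0 : ℝ) (leafSpaceDist S p₁ p₂),
        ∀ t ∈ Set.Icc (0 : ℝ) (leafSpaceDist S p₁ p₂),
          leafSpaceDist S (σ s) (σ t) = |t - s| := by
  intro p₁ p₂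
  obtain ⟨y, z, hy, hz, hd⟩ := leafSpaceDist_attained hclosed hinv p₁ p₂
  set ρ := leafSpaceDist S p₁ p₂ with hρ
  obtain ⟨γ, hγ0, hγρ, hiso⟩ := hgeo y z
  rw [hd] at hγρ hiso
  refine ⟨fun t => Quotient.mk S (γ t), ?_, ?_, ?_⟩
  · show Quotient.mk S (γ 0) = p₁
    rw [hγ0, hy]
  · show Quotient.mk S (γ ρ) = p₂
    rw [hγρ, hz]
  · dsimp only
    -- first prove the case s ≤ t
    have hρ0 : (0 : ℝ) ≤ ρ := by rw [← hd]; exact dist_nonneg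
    have key : ∀ s ∈ Set.Icc (0 : ℝ) ρ, ∀ t ∈ Set.Icc (0 : ℝ) ρ, s ≤ t →
        leafSpaceDist S (Quotient.mk S (γ s)) (Quotient.mk S (γ t)) = t - s := by
      intro s hs t ht hst
      have hle : leafSpaceDist S (Quotient.mk S (γ s)) (Quotient.mk S (γ t)) ≤ t - s := by
        have := leafSpaceDist_le_dist (S := S) hinv (γ s) (γ t)
        rwa [hiso s hs t ht, abs_of_nonneg (by linarith)] at this
      have h0 : (0 : ℝ) ∈ Set.Icc (0 : ℝ) ρ := ⟨le_refl _, hρ0⟩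
      have hρmem : ρ ∈ Set.Icc (0 : ℝ) ρ := ⟨hρ0, le_refl _⟩
      have h1 : leafSpaceDist S p₁ (Quotient.mk S (γ s)) ≤ s := by
        have := leafSpaceDist_le_dist (S := S) hinv (γ 0) (γ s)
        rw [hiso 0 h0 s hs, abs_of_nonneg (by linarith [hs.1])] at this
        rw [← hy, ← hγ0]
        linarith [this, hs.1]
      have h2 : leafSpaceDist S (Quotient.mk S (γ t)) p₂ ≤ ρ - t := by
        have := leafSpaceDist_le_dist (S := S) hinv (γ t) (γ ρ)
        rw [hiso t ht ρ hρmem, abs_of_nonneg (by linarith [ht.2])] at this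
        rw [← hz, ← hγρ]
        exact this
      have htri : ρ ≤ leafSpaceDist S p₁ (Quotient.mk S (γ s))
          + leafSpaceDist S (Quotient.mk S (γ s)) (Quotient.mk S (γ t))
          + leafSpaceDist S (Quotient.mk S (γ t)) p₂ := by
        have t1 := leafSpaceDist_triangle hclosed hinv p₁ (Quotient.mk S (γ s)) p₂
        have t2 := leafSpaceDist_triangle hclosed hinv
          (Quotient.mk S (γ s)) (Quotient.mk S (γ t)) p₂
        rw [hρ]
        linarith
      linarith
    intro s hs t ht
    rcases le_total s t with h | h
    · rw [key s hs t ht h, abs_of_nonneg (by linarith)]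
    · rw [leafSpaceDist_symm, key t ht s hs h, abs_of_nonpos (by linarith)]
      ring
end

section
/- Let ∇ be a metric connection on a Riemannian manifold M whose torsion tensor Tor(X,Y) takes values in a distribution V on which the curvature is controlled as follows: the first Bianchi identity gives R(X,Y)Z + R(Y,Z)X + R(Z,X)Y ∈ V for all vector fields X,Y,Z; and ∇ preserves the orthogonal splitting TM = H ⊕ V. Then for every horizontal X ∈ Γ(H) and vertical Y ∈ Γ(V), one has R(Y,X)X = 0. -/
open RealInnerProductSpace

/-- Pointwise algebraic form of Lemma 2.3: if `R` is the curvature tensor of a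
metric connection preserving the orthogonal splitting `TM = H ⊕ V` and whose
torsion is vertical (so that the cyclic Bianchi sum of `R` is vertical), then
`R(Y,X)X = 0` for horizontal `X` and vertical `Y`. -/
theorem curvature_mixed_vanish
    {E : Type*} [NormedAddCommGroup E] [InnerProductSpace ℝ E]
    (H : Submodule ℝ E) (R : E → E → E → E)
    -- metric compatibility: ⟨R(X,Y)Z, W⟩ = −⟨R(X,Y)W, Z⟩
    (hskew : ∀ X Y Z W : E, ⟪R X Y Z, W⟫ = -⟪R X Y W, Z⟫)
    -- ∇ preserves H and V, hence so does R(X,Y):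
    (hH : ∀ X Y Z : E, Z ∈ H → R X Y Z ∈ H)
    (hV : ∀ X Y Z : E, Z ∈ Hᗮ → R X Y Z ∈ Hᗮ)
    -- first Bianchi identity for a connection with vertical torsion:
    (hBianchi : ∀ X Y Z : E, R X Y Z + R Y Z X + R Z X Y ∈ Hᗮ) :
    ∀ X ∈ H, ∀ Y ∈ Hᗮ, R Y X X = 0 := by
  intro X hX Y hY
  -- It suffices to show ⟪R Y X X, W⟫ = 0 for all W ∈ H, since R Y X X ∈ H.
  have key : ∀ W ∈ H, ⟪R Y X X, W⟫ = 0 := by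
    intro W hW
    -- Second step first: ⟪R X Y W, X⟫ = 0.
    have h2 : ⟪R X Y W, X⟫ = 0 := by
      have hb := hBianchi X Y W
      have hb0 : ⟪R X Y W + R Y W X + R W X Y, X⟫ = 0 :=
        (Submodule.mem_orthogonal' H _).1 hb X hX
      have hself : ⟪R Y W X, X⟫ = 0 := by
        have := hskew Y W X X
        linarith
      have hWXY : ⟪R W X Y, X⟫ = 0 :=
        (Submodule.mem_orthogonal' H _).1 (hV W X Y hY) X hX
      rw [inner_add_left, inner_add_left, hself, hWXY] at hb0
      linarith
    -- Bianchi for (Y, X, X):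
    have hb := hBianchi Y X X
    have hb0 : ⟪R Y X X + R X X Y + R X Y X, W⟫ = 0 :=
      (Submodule.mem_orthogonal' H _).1 hb W hW
    have hXXY : ⟪R X X Y, W⟫ = 0 :=
      (Submodule.mem_orthogonal' H _).1 (hV X X Y hY) W hW
    have hXYX : ⟪R X Y X, W⟫ = -⟪R X Y W, X⟫ := hskew X Y X W
    rw [inner_add_left, inner_add_left, hXXY, hXYX, h2] at hb0
    linarith
  have hmem : R Y X X ∈ H := hH Y X X hX
  have := key (R Y X X) hmem
  exact inner_self_eq_zero.mp this
end

section
/- Let ∇ be a metric connection with torsion on a Riemannian manifold preserving an orthogonal splitting TM = H ⊕ V, with torsion taking values in V. For a horizontal geodesic γ (i.e., γ̇ ∈ H and ∇_{γ̇}γ̇ = 0) with the property that ⟨R(X,γ̇)γ̇,X⟩ ≤ −K·(|X|²|γ̇|² − ⟨X,γ̇⟩²) for horizontal X with some K ≥ 0, any vector field V along γ satisfying the F-Jacobi equations ∇_{γ̇}V_V + Tor(V,γ̇) = 0 and ∇_{γ̇}∇_{γ̇}V_H + R(V_H,γ̇)γ̇ = 0, with V_H(0) = 0 and V(s) = 0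 for some s > 0, must vanish identically on [0,s]. -/
open RealInnerProductSpace Set

/-!
Under nonpositive transverse curvature the Jacobi equation makes `‖V_H‖²` convex, since its
second derivative is `2 (‖V_H'‖² - ⟪R V_H, V_H⟫) ≥ 0`; vanishing at both ends, it vanishes on
`[0, s]`. The vertical equation then reads `V_V' = -Tor(V_V, γ̇)`, a linear ODE, and uniqueness
of its solution with `V_V(s) = 0` forces `V_V = 0`.
-/

section

variable {E : Type*} [NormedAddCommGroup E]

theorem convexOn_norm_sq_of_inner_deriv2_nonneg [InnerProductSpace ℝ E] {f f' f'' : ℝ → E}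
    {a b : ℝ} (hf : ∀ t, HasDerivAt f (f' t) t) (hf' : ∀ t, HasDerivAt f' (f'' t) t)
    (hf'' : ∀ t ∈ Ioo a b, 0 ≤ ⟪f'' t, f t⟫) :
    ConvexOn ℝ (Icc a b) (‖f ·‖ ^ 2) := by
  have hcont : Continuous f := continuous_iff_continuousAt.2 fun t => (hf t).continuousAt
  refine convexOn_of_hasDerivWithinAt2_nonneg (convex_Icc a b)
    (f' := fun t => 2 * ⟪f t, f' t⟫) (f'' := fun t => 2 * (⟪f t, f'' t⟫ + ⟪f' t, f' t⟫))
    (hcont.norm.pow 2).continuousOn (fun t _ => (hf t).norm_sq.hasDerivWithinAt)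
    (fun t _ => (((hf t).inner ℝ (hf' t)).const_mul 2).hasDerivWithinAt) fun t ht => ?_
  rw [interior_Icc] at ht
  have := hf'' t ht
  rw [real_inner_comm] at this
  have := real_inner_self_nonneg (x := f' t)
  positivity

theorem eqOn_zero_of_convexOn_norm_sq {f : ℝ → E} {a b : ℝ}
    (hconv : ConvexOn ℝ (Icc a b) (‖f ·‖ ^ 2)) (ha : f a = 0) (hb : f b = 0) :
    EqOn f 0 (Icc a b) := fun t ht => by
  have hab : a ≤ b := ht.1.trans ht.2
  have := hconv.le_on_segment (left_mem_Icc.2 hab) (right_mem_Icc.2 hab)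
    (by rwa [segment_eq_Icc hab])
  simp only [ha, hb, norm_zero, max_self] at this
  simpa using this

theorem eqOn_zero_of_hasDerivWithinAt_clm_apply [NormedSpace ℝ E] {A : ℝ → E →L[ℝ] E}
    {x : ℝ → E} {a b : ℝ} (hA : ContinuousOn A (Icc a b)) (hx : ContinuousOn x (Icc a b))
    (hx' : ∀ t ∈ Ioc a b, HasDerivWithinAt x (A t (x t)) (Iic t) t) (hb : x b = 0) :
    EqOn x 0 (Icc a b) := by
  obtain ⟨C, hC⟩ := isCompact_Icc.exists_bound_of_continuousOn hA
  have hlip : ∀ t ∈ Ioc a b, LipschitzOnWith C.toNNReal (A t) univ := fun t ht =>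
    (ContinuousLinearMap.lipschitzWith_of_opNorm_le
      ((hC t (Ioc_subset_Icc_self ht)).trans (Real.le_coe_toNNReal C))).lipschitzOnWith
  refine ODE_solution_unique_of_mem_Icc_left hlip hx hx' (fun _ _ => trivial) continuousOn_const
    (fun t _ => ?_) (fun _ _ => trivial) hb
  rw [Pi.zero_apply, map_zero]
  exact hasDerivWithinAt_const t (Iic t) 0

end

theorem fJacobi_no_focal_points_general
    {E : Type*} [NormedAddCommGroup E] [InnerProductSpace ℝ E]
    (H : Submodule ℝ E) (K s : ℝ) (hK : 0 ≤ K)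
    (u : E)
    (R : ℝ → E → E) (T : ℝ → E →L[ℝ] E)
    (hTcont : Continuous T)
    (hcurv : ∀ t ∈ Set.Icc (0 : ℝ) s, ∀ X ∈ H,
      ⟪R t X, X⟫ ≤ -K * (‖X‖ ^ 2 * ‖u‖ ^ 2 - ⟪X, u⟫ ^ 2))
    (VH VV : ℝ → E)
    (hVHmem : ∀ t, VH t ∈ H)
    (hVHsm : ContDiff ℝ 2 VH) (hVVsm : ContDiff ℝ 1 VV)
    (hJac1 : ∀ t ∈ Set.Icc (0 : ℝ) s, deriv VV t + T t (VH t + VV t) = 0)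
    (hJac2 : ∀ t ∈ Set.Icc (0 : ℝ) s, deriv (deriv VH) t + R t (VH t) = 0)
    (hinit : VH 0 = 0) (hendH : VH s = 0) (hendV : VV s = 0) :
    ∀ t ∈ Set.Icc (0 : ℝ) s, VH t = 0 ∧ VV t = 0 := by
  have hVH' : ContDiff ℝ 1 (deriv VH) := hVHsm.iterate_deriv' 1 1
  have hVH_zero : EqOn VH 0 (Icc 0 s) := by
    refine eqOn_zero_of_convexOn_norm_sq (convexOn_norm_sq_of_inner_deriv2_nonneg
      (fun t => (hVHsm.differentiable (by norm_num) t).hasDerivAt)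
      (fun t => (hVH'.differentiable one_ne_zero t).hasDerivAt) fun t ht => ?_) hinit hendH
    have ht' := Ioo_subset_Icc_self ht
    have hgram : ⟪VH t, u⟫ ^ 2 ≤ ‖VH t‖ ^ 2 * ‖u‖ ^ 2 := by
      rw [← mul_pow, ← sq_abs]
      exact pow_le_pow_left₀ (abs_nonneg _) (abs_real_inner_le_norm _ _) 2
    rw [eq_neg_of_add_eq_zero_left (hJac2 t ht'), inner_neg_left, neg_nonneg]
    linarith [hcurv t ht' _ (hVHmem t), mul_nonneg hK (sub_nonneg.2 hgram)]
  have hVV_zero : EqOn VV 0 (Icc 0 s) := by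
    refine eqOn_zero_of_hasDerivWithinAt_clm_apply (A := fun t => -T t)
      hTcont.neg.continuousOn hVVsm.continuous.continuousOn (fun t ht => ?_) hendV
    have ht' := Ioc_subset_Icc_self ht
    have hVV' := eq_neg_of_add_eq_zero_left (hJac1 t ht')
    rw [hVH_zero ht', Pi.zero_apply, zero_add] at hVV'
    simpa [hVV'] using (hVVsm.differentiable one_ne_zero t).hasDerivAt.hasDerivWithinAt
  exact fun t ht => ⟨hVH_zero ht, hVV_zero ht⟩

/-- No focal points (Lemma 4.2), in a parallel orthonormal trivialization along the
horizontal geodesic: the tangent spaces along `γ` are identified with a fixed inner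
product space `E`, the horizontal distribution with a fixed subspace `H`, the velocity
`γ̇` with a fixed horizontal vector `u`, covariant derivative `∇_{γ̇}` with the ordinary
derivative, `R t X = R(X,γ̇)γ̇` is the curvature operator and `T t X = Tor(X,γ̇)` the
(vertical-valued) torsion operator at time `t`.  If the transverse curvature satisfies
`⟨R(X,γ̇)γ̇,X⟩ ≤ −K(|X|²|γ̇|² − ⟨X,γ̇⟩²)` with `K ≥ 0`, then an F-Jacobi field `V = V_H + V_V`
(solving `∇_{γ̇}V_V + Tor(V,γ̇) = 0` and `∇_{γ̇}∇_{γ̇}V_H + R(V_H,γ̇)γ̇ = 0`) with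
`V_H(0) = 0` and `V(s) = 0` for some `s > 0` vanishes identically on `[0,s]`. -/
theorem fJacobi_no_focal_points
    {E : Type*} [NormedAddCommGroup E] [InnerProductSpace ℝ E]
    (H : Submodule ℝ E) (K s : ℝ) (hK : 0 ≤ K) (hs : 0 < s)
    (u : E) (hu : u ∈ H)
    (R : ℝ → E → E) (T : ℝ → E →L[ℝ] E)
    (hTcont : Continuous T)
    (hTvert : ∀ t (X : E), T t X ∈ Hᗮ)
    (hRhor : ∀ t (X : E), X ∈ H → R t X ∈ H)
    (hcurv : ∀ t ∈ Set.Icc (0 : ℝ) s, ∀ X ∈ H,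
      ⟪R t X, X⟫ ≤ -K * (‖X‖ ^ 2 * ‖u‖ ^ 2 - ⟪X, u⟫ ^ 2))
    (VH VV : ℝ → E)
    (hVHmem : ∀ t, VH t ∈ H) (hVVmem : ∀ t, VV t ∈ Hᗮ)
    (hVHsm : ContDiff ℝ 2 VH) (hVVsm : ContDiff ℝ 1 VV)
    (hJac1 : ∀ t ∈ Set.Icc (0 : ℝ) s, deriv VV t + T t (VH t + VV t) = 0)
    (hJac2 : ∀ t ∈ Set.Icc (0 : ℝ) s, deriv (deriv VH) t + R t (VH t) = 0)
    (hinit : VH 0 = 0) (hendH : VH s = 0) (hendV : VV s = 0) :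
    ∀ t ∈ Set.Icc (0 : ℝ) s, VH t = 0 ∧ VV t = 0 :=
  fJacobi_no_focal_points_general H K s hK u R T hTcont hcurv VH VV hVHmem hVHsm hVVsm hJac1 hJac2
    hinit hendH hendV
end
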